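/- arXiv:2105.03762 — 5 statements merged into one kernel-verified Lean document; each statement's English description precedes it below -/
import Mathlib

section
/- Let U be an n×n complex unitary matrix and let x and y be unit vectors in ℂⁿ. Then there is pretty good state transfer from x to y (i.e., there exists γ ∈ ℂ with |γ| = 1 such that for every ε > 0 there is t ∈ ℤ with ‖U^t x − γ y‖ < ε) if and only if for every ε > 0 there exists t ∈ ℤ such that |⟨U^t x, y⟩| > 1 − ε. -/
open Matrix Complex Finset

/-- The Euclidean norm of a vector in `ℂⁿ`. -/
noncomputable def euclNorm {ι : Type*} [Fintype ι] (v : ι → ℂ) : ℝ :=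
  Real.sqrt (∑ i, ‖v i‖ ^ 2)

/-- The Euclidean inner product `⟨v, w⟩ = ∑ᵢ vᵢ conj(wᵢ)` on `ℂⁿ`. -/
noncomputable def euclInner {ι : Type*} [Fintype ι] (v w : ι → ℂ) : ℂ :=
  ∑ i, v i * star (w i)

/-- Pretty good state transfer from `x` to `y` under the unitary `U`. -/
def PGST {ι : Type*} [Fintype ι] [DecidableEq ι] (U : Matrix ι ι ℂ) (x y : ι → ℂ) : Prop :=
  ∃ γ : ℂ, ‖γ‖ = 1 ∧ ∀ ε > 0, ∃ t : ℤ, euclNorm ((U ^ t).mulVec x - γ • y) < ε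

/-!
For unit vectors `u` and `v`, the phase `γ` minimising `‖u - γ • v‖` gives
`‖u - γ • v‖ ^ 2 = 2 - 2 * ‖⟪u, v⟫‖`. Hence `|⟨Uᵗx, y⟩|` comes arbitrarily close to `1` exactly
when the orbit `Uᵗx` comes arbitrarily close to the circle `{γ • y : ‖γ‖ = 1}`. The distance from
`γ • y` to the orbit is continuous in `γ`, so on the compact circle its infimum `0` is attained
at a single phase.
-/

open scoped InnerProductSpace

theorem Matrix.zpow_mem_unitaryGroup {n α : Type*} [Fintype n] [DecidableEq n] [CommRing α]
    [StarRing α] {U : Matrix n n α} (hU : U ∈ unitaryGroup n α) (t : ℤ) :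
    U ^ t ∈ unitaryGroup n α := by
  have h := coe_units_zpow (Unitary.toUnits ⟨U, hU⟩) t
  rw [← map_zpow, Unitary.val_toUnits_apply, Unitary.val_toUnits_apply] at h
  exact h ▸ SetLike.coe_mem _

theorem Matrix.norm_toLp_mulVec_of_mem_unitaryGroup {n : Type*} [Fintype n] [DecidableEq n]
    {U : Matrix n n ℂ} (hU : U ∈ unitaryGroup n ℂ) (x : n → ℂ) :
    ‖WithLp.toLp 2 (U *ᵥ x)‖ = ‖WithLp.toLp 2 x‖ := by
  rw [← toEuclideanCLM_toLp]
  exact ContinuousLinearMap.norm_map_of_mem_unitary (Unitary.map_mem toEuclideanCLM hU) _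

theorem euclNorm_eq_norm_toLp {ι : Type*} [Fintype ι] (v : ι → ℂ) :
    euclNorm v = ‖WithLp.toLp 2 v‖ := by
  rw [euclNorm, EuclideanSpace.norm_eq]

theorem euclInner_eq_inner_toLp {ι : Type*} [Fintype ι] (v w : ι → ℂ) :
    euclInner v w = ⟪WithLp.toLp 2 w, WithLp.toLp 2 v⟫_ℂ := by
  simp [euclInner, PiLp.inner_apply]

theorem pgst_iff_exists_smul_mem_closure_orbit {ι : Type*} [Fintype ι] [DecidableEq ι]
    (U : Matrix ι ι ℂ) (x y : ι → ℂ) :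
    PGST U x y ↔ ∃ γ : ℂ, ‖γ‖ = 1 ∧
      γ • WithLp.toLp 2 y ∈ closure (Set.range fun t : ℤ => WithLp.toLp 2 ((U ^ t) *ᵥ x)) := by
  simp only [PGST, Metric.mem_closure_range_iff, dist_eq_norm, norm_sub_rev, euclNorm_eq_norm_toLp,
    WithLp.toLp_sub, WithLp.toLp_smul]

section PhaseDistance

variable {E : Type*} [NormedAddCommGroup E] [InnerProductSpace ℂ E]

theorem norm_sub_smul_sq_of_norm_eq_one (u v : E) {γ : ℂ} (hγ : ‖γ‖ = 1) :
    ‖u - γ • v‖ ^ 2 = ‖u‖ ^ 2 - 2 * (γ * ⟪u, v⟫_ℂ).re + ‖v‖ ^ 2 := by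
  rw [@norm_sub_sq ℂ, inner_smul_right, norm_smul, hγ, one_mul]
  rfl

theorem sq_norm_sub_two_norm_inner_le (u v : E) {γ : ℂ} (hγ : ‖γ‖ = 1) :
    ‖u‖ ^ 2 - 2 * ‖⟪u, v⟫_ℂ‖ + ‖v‖ ^ 2 ≤ ‖u - γ • v‖ ^ 2 := by
  have h := re_le_norm (γ * ⟪u, v⟫_ℂ)
  rw [norm_mul, hγ, one_mul] at h
  rw [norm_sub_smul_sq_of_norm_eq_one u v hγ]
  linarith

theorem exists_norm_sub_smul_sq_eq (u v : E) :
    ∃ γ : ℂ, ‖γ‖ = 1 ∧ ‖u - γ • v‖ ^ 2 = ‖u‖ ^ 2 - 2 * ‖⟪u, v⟫_ℂ‖ + ‖v‖ ^ 2 := by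
  obtain ⟨γ, hγ, h⟩ := Complex.exists_norm_eq_mul_self ⟪u, v⟫_ℂ
  refine ⟨γ, hγ, ?_⟩
  rw [norm_sub_smul_sq_of_norm_eq_one u v hγ, ← h, ofReal_re]

theorem exists_smul_mem_closure_range_iff {ι : Type*} {u : ι → E} {v : E}
    (hu : ∀ t, ‖u t‖ = 1) (hv : ‖v‖ = 1) :
    (∃ γ : ℂ, ‖γ‖ = 1 ∧ γ • v ∈ closure (Set.range u)) ↔
      ∀ ε > 0, ∃ t, 1 - ε < ‖⟪u t, v⟫_ℂ‖ := by
  constructor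
  · rintro ⟨γ, hγ, hmem⟩ ε hε
    obtain ⟨t, ht⟩ := Metric.mem_closure_range_iff.1 hmem (√ε) (Real.sqrt_pos.2 hε)
    rw [dist_comm, dist_eq_norm] at ht
    have hclose : ‖u t - γ • v‖ ^ 2 < ε := by
      simpa [Real.sq_sqrt hε.le] using pow_lt_pow_left₀ ht (norm_nonneg _) two_ne_zero
    have hle := sq_norm_sub_two_norm_inner_le (u t) v hγ
    rw [hu, hv] at hle
    exact ⟨t, by linarith⟩
  · intro h
    obtain ⟨t₀, -⟩ := h 1 one_pos
    have hne : (Set.range u).Nonempty := ⟨u t₀, t₀, rfl⟩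
    obtain ⟨γ, hγ, hmin⟩ := (isCompact_sphere (0 : ℂ) 1).exists_isMinOn
      (NormedSpace.sphere_nonempty.2 zero_le_one)
      ((Metric.continuous_infDist_pt (Set.range u)).comp (continuous_id.smul continuous_const)
        |>.continuousOn)
    refine ⟨γ, mem_sphere_zero_iff_norm.1 hγ, (Metric.mem_closure_iff_infDist_zero hne).2 ?_⟩
    refine le_antisymm (le_of_forall_pos_lt_add fun δ hδ => ?_) Metric.infDist_nonneg
    obtain ⟨t, ht⟩ := h (δ ^ 2 / 2) (by positivity)
    obtain ⟨γ', hγ', hγ'_eq⟩ := exists_norm_sub_smul_sq_eq (u t) v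
    have hclose : ‖u t - γ' • v‖ < δ := by
      refine lt_of_pow_lt_pow_left₀ 2 hδ.le ?_
      rw [hγ'_eq, hu, hv]
      linarith
    calc Metric.infDist (γ • v) (Set.range u) ≤ Metric.infDist (γ' • v) (Set.range u) :=
          hmin (mem_sphere_zero_iff_norm.2 hγ')
      _ ≤ dist (γ' • v) (u t) := Metric.infDist_le_dist_of_mem ⟨t, rfl⟩
      _ < 0 + δ := by rwa [dist_comm, dist_eq_norm, zero_add]

end PhaseDistance

theorem stmt3 {n : ℕ} (U : Matrix (Fin n) (Fin n) ℂ)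
    (hU : U ∈ Matrix.unitaryGroup (Fin n) ℂ)
    (x y : Fin n → ℂ) (hx : euclNorm x = 1) (hy : euclNorm y = 1) :
    PGST U x y ↔ ∀ ε > 0, ∃ t : ℤ, 1 - ε < ‖euclInner ((U ^ t).mulVec x) y‖ := by
  have horbit (t : ℤ) : ‖WithLp.toLp 2 ((U ^ t) *ᵥ x)‖ = 1 := by
    rw [norm_toLp_mulVec_of_mem_unitaryGroup (zpow_mem_unitaryGroup hU t),
      ← euclNorm_eq_norm_toLp, hx]
  rw [euclNorm_eq_norm_toLp] at hy
  rw [pgst_iff_exists_smul_mem_closure_orbit, exists_smul_mem_closure_range_iff horbit hy]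
  simp_rw [euclInner_eq_inner_toLp, norm_inner_symm]
end

section
/- Let U be an n×n complex unitary matrix with spectral decomposition U = Σ_r e^{iθ_r} F_r, and let x, y be unit vectors in ℂⁿ. If pretty good state transfer occurs from x to y, then x and y are strongly cospectral, i.e., for every r there exists μ_r ∈ ℂ with |μ_r| = 1 and F_r x = μ_r F_r y. -/
open Matrix Complex Finset

/-! Each spectral idempotent intertwines `U` with a scalar, `F_r U^t = e^{itθ_r} F_r`, so applying
the continuous map `F_r` to the orbit `U^t x` accumulating at `γ y` shows that `γ F_r y` is a limit
of the points `e^{itθ_r} F_r x`. These lie on the compact circle `{ν F_r x : |ν| = 1}`, which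
therefore contains `γ F_r y`. -/

section SpectralSum

variable {m K ι : Type*} [Fintype m] [Field K] [Fintype ι]
  {F : ι → Matrix m m K}

theorem mul_sum_smul_of_orthogonal (hidem : ∀ r, F r * F r = F r)
    (horth : ∀ r s, r ≠ s → F r * F s = 0) (a : ι → K) (r : ι) :
    F r * ∑ s, a s • F s = a r • F r := by
  rw [Finset.mul_sum, Finset.sum_eq_single r
    (fun s _ hsr => by rw [Matrix.mul_smul, horth r s hsr.symm, smul_zero])
    (fun h => absurd (mem_univ r) h), Matrix.mul_smul, hidem r]

theorem sum_smul_mul_sum_smul_of_orthogonal (hidem : ∀ r, F r * F r = F r)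
    (horth : ∀ r s, r ≠ s → F r * F s = 0) (a b : ι → K) :
    (∑ s, a s • F s) * ∑ s, b s • F s = ∑ s, (a s * b s) • F s := by
  simp only [Finset.sum_mul, Matrix.smul_mul, mul_sum_smul_of_orthogonal hidem horth, smul_smul]

variable [DecidableEq m]

theorem sum_smul_mul_sum_inv_smul_of_orthogonal (hidem : ∀ r, F r * F r = F r)
    (horth : ∀ r s, r ≠ s → F r * F s = 0) (hsum : ∑ r, F r = 1) {c : ι → K}
    (hc : ∀ s, c s ≠ 0) : (∑ s, c s • F s) * ∑ s, (c s)⁻¹ • F s = 1 := by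
  simp only [sum_smul_mul_sum_smul_of_orthogonal hidem horth, mul_inv_cancel₀ (hc _), one_smul,
    hsum]

theorem mul_sum_smul_zpow_of_orthogonal (hidem : ∀ r, F r * F r = F r)
    (horth : ∀ r s, r ≠ s → F r * F s = 0) (hsum : ∑ r, F r = 1) {c : ι → K}
    (hc : ∀ s, c s ≠ 0) (r : ι) (t : ℤ) :
    F r * (∑ s, c s • F s) ^ t = c r ^ t • F r := by
  have hinv := sum_smul_mul_sum_inv_smul_of_orthogonal hidem horth hsum hc
  have hdet := isUnit_det_of_right_inverse hinv
  induction t using Int.induction_on with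
  | zero => simp
  | succ t ih =>
    rw [zpow_add_one hdet, ← mul_assoc, ih, Matrix.smul_mul,
      mul_sum_smul_of_orthogonal hidem horth, smul_smul, ← zpow_add_one₀ (hc r)]
  | pred t ih =>
    rw [zpow_sub_one hdet, ← mul_assoc, ih, Matrix.smul_mul, inv_eq_right_inv hinv,
      mul_sum_smul_of_orthogonal hidem horth, smul_smul, ← zpow_sub_one₀ (hc r)]

end SpectralSum

theorem norm_le_euclNorm {ι : Type*} [Fintype ι] (v : ι → ℂ) : ‖v‖ ≤ euclNorm v :=
  (pi_norm_le_iff_of_nonneg (Real.sqrt_nonneg _)).2 fun i =>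
    Real.le_sqrt_of_sq_le (single_le_sum (f := fun j => ‖v j‖ ^ 2)
      (fun _ _ => sq_nonneg _) (mem_univ i))

theorem PGST.exists_smul_mem_closure {ι : Type*} [Fintype ι] [DecidableEq ι]
    {U : Matrix ι ι ℂ} {x y : ι → ℂ} (h : PGST U x y) :
    ∃ γ : ℂ, ‖γ‖ = 1 ∧ γ • y ∈ closure (Set.range fun t : ℤ => (U ^ t) *ᵥ x) := by
  obtain ⟨γ, hγ, happrox⟩ := h
  refine ⟨γ, hγ, Metric.mem_closure_iff.2 fun ε hε => ?_⟩
  obtain ⟨t, ht⟩ := happrox ε hε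
  exact ⟨_, ⟨t, rfl⟩, by rw [dist_comm, dist_eq_norm]; exact (norm_le_euclNorm _).trans_lt ht⟩

theorem exists_norm_eq_one_of_mem_closure_zpow_smul {E : Type*} [AddCommGroup E] [Module ℂ E]
    [TopologicalSpace E] [ContinuousSMul ℂ E] [T2Space E] {ζ : ℂ} (hζ : ‖ζ‖ = 1) {v w : E}
    (hw : w ∈ closure (Set.range fun t : ℤ => ζ ^ t • v)) : ∃ ν : ℂ, ‖ν‖ = 1 ∧ w = ν • v := by
  have hcircle : IsClosed ((· • v) '' Metric.sphere (0 : ℂ) 1) :=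
    ((isCompact_sphere 0 1).image (continuous_id.smul continuous_const)).isClosed
  have hrange : Set.range (fun t : ℤ => ζ ^ t • v) ⊆ (· • v) '' Metric.sphere (0 : ℂ) 1 := by
    rintro _ ⟨t, rfl⟩
    exact ⟨ζ ^ t, by simp [hζ], rfl⟩
  obtain ⟨ν, hν, rfl⟩ := closure_minimal hrange hcircle hw
  exact ⟨ν, mem_sphere_zero_iff_norm.1 hν, rfl⟩

theorem stmt5_general {n : ℕ} {ι : Type*} [Fintype ι]
    (θ : ι → ℝ) (F : ι → Matrix (Fin n) (Fin n) ℂ)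
    (hidem : ∀ r, F r * F r = F r)
    (horth : ∀ r s, r ≠ s → F r * F s = 0)
    (hsum : ∑ r, F r = 1)
    (U : Matrix (Fin n) (Fin n) ℂ)
    (hU : U = ∑ r, Complex.exp (θ r * Complex.I) • F r)
    (x y : Fin n → ℂ)
    (hpgst : PGST U x y) :
    ∀ r, ∃ μ : ℂ, ‖μ‖ = 1 ∧ (F r).mulVec x = μ • (F r).mulVec y := by
  obtain ⟨γ, hγ, hmem⟩ := hpgst.exists_smul_mem_closure
  intro r
  have hFy : γ • F r *ᵥ y ∈
      closure (Set.range fun t : ℤ => Complex.exp (θ r * Complex.I) ^ t • F r *ᵥ x) := by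
    rw [← mulVec_smul]
    refine map_mem_closure (continuous_const.matrix_mulVec continuous_id) hmem ?_
    rintro _ ⟨t, rfl⟩
    refine ⟨t, ?_⟩
    rw [mulVec_mulVec, hU, mul_sum_smul_zpow_of_orthogonal hidem horth hsum
      (fun s => Complex.exp_ne_zero _), smul_mulVec]
  obtain ⟨ν, hν, hνx⟩ :=
    exists_norm_eq_one_of_mem_closure_zpow_smul (Complex.norm_exp_ofReal_mul_I (θ r)) hFy
  have hν0 : ν ≠ 0 := norm_ne_zero_iff.1 (hν.symm ▸ one_ne_zero)
  refine ⟨ν⁻¹ * γ, by rw [norm_mul, norm_inv, hν, hγ, inv_one, one_mul], ?_⟩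
  rw [mul_smul, hνx, smul_smul, inv_mul_cancel₀ hν0, one_smul]

theorem stmt5 {n : ℕ} {ι : Type*} [Fintype ι]
    (θ : ι → ℝ) (F : ι → Matrix (Fin n) (Fin n) ℂ)
    (hdist : ∀ r s, Complex.exp (θ r * Complex.I) = Complex.exp (θ s * Complex.I) → r = s)
    (hherm : ∀ r, (F r)ᴴ = F r)
    (hidem : ∀ r, F r * F r = F r)
    (horth : ∀ r s, r ≠ s → F r * F s = 0)
    (hsum : ∑ r, F r = 1)
    (U : Matrix (Fin n) (Fin n) ℂ)
    (hU : U = ∑ r, Complex.exp (θ r * Complex.I) • F r)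
    (x y : Fin n → ℂ) (hx : euclNorm x = 1) (hy : euclNorm y = 1)
    (hpgst : PGST U x y) :
    ∀ r, ∃ μ : ℂ, ‖μ‖ = 1 ∧ (F r).mulVec x = μ • (F r).mulVec y :=
  stmt5_general θ F hidem horth hsum U hU x y hpgst
end

section
/- Let U be an n×n complex unitary matrix with spectral decomposition U = Σ_r e^{iθ_r} F_r, let m be a positive integer, and let x, y be unit vectors in ℂⁿ that are m-strongly cospectral. If there is pretty good state transfer from x to y, then there is pretty good state transfer from y to x. -/
/-!
Pretty good state transfer is symmetric for any unitary `U`: if `‖U^t x - γ y‖ < ε`, then applying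
the unitary `U^(-t)` and rescaling by the unimodular `-γ̄` gives `‖U^(-t) y - γ̄ x‖ < ε`.
-/

open Matrix Complex Finset

lemma Complex.exp_ofReal_mul_I_mem_unitary (θ : ℝ) : exp (θ * I) ∈ unitary ℂ := by
  rw [Unitary.mem_iff_star_mul_self, star_def, conj_mul', norm_exp_ofReal_mul_I, ofReal_one,
    one_pow]

section Matrix

variable {κ R : Type*} [Fintype κ] [DecidableEq κ] [CommRing R] [StarRing R]

theorem Matrix.sum_smul_mem_unitary {ι : Type*} [Fintype ι] {c : ι → R}
    {F : ι → Matrix κ κ R} (hc : ∀ r, c r ∈ unitary R) (hherm : ∀ r, (F r).IsHermitian)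
    (hidem : ∀ r, IsIdempotentElem (F r)) (horth : ∀ r s, r ≠ s → F r * F s = 0)
    (hsum : ∑ r, F r = 1) :
    ∑ r, c r • F r ∈ unitary (Matrix κ κ R) := by
  rw [← unitaryGroup, mem_unitaryGroup_iff', star_sum, sum_mul_sum]
  calc ∑ r, ∑ s, star (c r • F r) * (c s • F s)
      = ∑ r, ∑ s, (star (c r) * c s) • (F r * F s) := by
        simp only [star_smul, star_eq_conjTranspose, (hherm _).eq, smul_mul_smul_comm]
    _ = ∑ r, (star (c r) * c r) • (F r * F r) := by
        refine sum_congr rfl fun r _ => sum_eq_single r (fun s _ hs => ?_) (by simp)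
        rw [horth r s hs.symm, smul_zero]
    _ = 1 := by
        simp only [Unitary.star_mul_self_of_mem (hc _), (hidem _).eq, one_smul, hsum]

theorem Matrix.zpow_mem_unitary {U : Matrix κ κ R} (hU : U ∈ unitary (Matrix κ κ R)) :
    ∀ t : ℤ, U ^ t ∈ unitary (Matrix κ κ R)
  | (k : ℕ) => by
    rw [zpow_natCast]
    exact pow_mem hU k
  | .negSucc k => by
    have hUk := pow_mem hU (k + 1)
    rw [zpow_negSucc, inv_eq_left_inv (Unitary.star_mul_self_of_mem hUk)]
    exact Unitary.star_mem hUk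

end Matrix

section StateTransfer

variable {κ : Type*} [Fintype κ]

lemma euclNorm_smul (c : ℂ) (v : κ → ℂ) : euclNorm (c • v) = ‖c‖ * euclNorm v := by
  simp only [euclNorm, Pi.smul_apply, smul_eq_mul, norm_mul, mul_pow, ← mul_sum]
  rw [Real.sqrt_mul (sq_nonneg _), Real.sqrt_sq (norm_nonneg c)]

lemma sum_norm_sq_eq_re_star_dotProduct (v : κ → ℂ) :
    ∑ i, ‖v i‖ ^ 2 = (star v ⬝ᵥ v).re := by
  simp only [dotProduct, re_sum, Pi.star_apply, star_def, conj_mul', ← ofReal_pow, ofReal_re]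

lemma euclNorm_mulVec_of_mem_unitary [DecidableEq κ] {V : Matrix κ κ ℂ}
    (hV : V ∈ unitary (Matrix κ κ ℂ)) (w : κ → ℂ) : euclNorm (V *ᵥ w) = euclNorm w := by
  rw [euclNorm, euclNorm, sum_norm_sq_eq_re_star_dotProduct, sum_norm_sq_eq_re_star_dotProduct,
    star_mulVec, ← dotProduct_mulVec, mulVec_mulVec, ← star_eq_conjTranspose,
    Unitary.star_mul_self_of_mem hV, one_mulVec]

theorem PGST.symm [DecidableEq κ] {U : Matrix κ κ ℂ} (hU : U ∈ unitary (Matrix κ κ ℂ))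
    {x y : κ → ℂ} (h : PGST U x y) : PGST U y x := by
  obtain ⟨γ, hγ, hγε⟩ := h
  refine ⟨star γ, by rw [norm_star, hγ], fun ε hε => ?_⟩
  obtain ⟨t, ht⟩ := hγε ε hε
  have hγγ : star γ * γ = 1 := by
    rw [star_def, conj_mul', hγ, ofReal_one, one_pow]
  have hinv : U ^ (-t) * U ^ t = 1 :=
    zpow_neg_mul_zpow_self t (isUnit_det_of_left_inverse (Unitary.star_mul_self_of_mem hU))
  have hback : U ^ (-t) *ᵥ ((-star γ) • (U ^ t *ᵥ x - γ • y)) = U ^ (-t) *ᵥ y - star γ • x := by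
    rw [mulVec_smul, mulVec_sub, mulVec_mulVec, hinv, one_mulVec, mulVec_smul, smul_sub,
      smul_smul, neg_mul, hγγ]
    module
  refine ⟨-t, ?_⟩
  rwa [← hback, euclNorm_mulVec_of_mem_unitary (zpow_mem_unitary hU _), euclNorm_smul, norm_neg,
    norm_star, hγ, one_mul]

end StateTransfer

theorem stmt9_general {n : ℕ} {ι : Type*} [Fintype ι]
    (θ : ι → ℝ) (F : ι → Matrix (Fin n) (Fin n) ℂ)
    (hherm : ∀ r, (F r)ᴴ = F r)
    (hidem : ∀ r, F r * F r = F r)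
    (horth : ∀ r s, r ≠ s → F r * F s = 0)
    (hsum : ∑ r, F r = 1)
    (U : Matrix (Fin n) (Fin n) ℂ)
    (hU : U = ∑ r, Complex.exp (θ r * Complex.I) • F r)
    (x y : Fin n → ℂ)
    (hpgst : PGST U x y) :
    PGST U y x := by
  subst hU
  exact hpgst.symm <| sum_smul_mem_unitary (fun r => exp_ofReal_mul_I_mem_unitary (θ r))
    hherm hidem horth hsum

theorem stmt9 {n : ℕ} {ι : Type*} [Fintype ι]
    (θ : ι → ℝ) (F : ι → Matrix (Fin n) (Fin n) ℂ)
    (hdist : ∀ r s, Complex.exp (θ r * Complex.I) = Complex.exp (θ s * Complex.I) → r = s)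
    (hherm : ∀ r, (F r)ᴴ = F r)
    (hidem : ∀ r, F r * F r = F r)
    (horth : ∀ r s, r ≠ s → F r * F s = 0)
    (hsum : ∑ r, F r = 1)
    (U : Matrix (Fin n) (Fin n) ℂ)
    (hU : U = ∑ r, Complex.exp (θ r * Complex.I) • F r)
    (x y : Fin n → ℂ) (hx : euclNorm x = 1) (hy : euclNorm y = 1)
    (m : ℕ) (hm : 0 < m) (σ : ι → ℤ)
    (hsc : ∀ r, (F r).mulVec x ≠ 0 →
      (F r).mulVec x = Complex.exp (2 * Real.pi * (σ r : ℂ) / m * Complex.I) • (F r).mulVec y)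
    (hcop : ∃ r, (F r).mulVec x ≠ 0 ∧ Int.gcd (σ r) m = 1)
    (hpgst : PGST U x y) :
    PGST U y x :=
  stmt9_general θ F hherm hidem horth hsum U hU x y hpgst
end

section
/- Let H = (h_{ab}) be an n×n complex Hermitian matrix with zero diagonal such that for every index a, Σ_{b} |h_{ab}| = 1. Then there exists an n×n complex matrix W = (w_{ab}) such that w_{ab} ≠ 0 if and only if h_{ab} ≠ 0, w_{ab}·conj(w_{ba}) = h_{ab} for all a, b, and Σ_b |w_{ab}|² = 1 for every a (i.e., H = W ∘ W* and W ∘ conj(W) is row-stochastic). -/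
/-!
Factor each entry `h` of `H` as `(h / √|h|) * √|h|`: put the phase factor `h / √|h|` above the
diagonal and the real factor `√|h|` below it. Because `H` is Hermitian, `w_ab * conj w_ba = h_ab`
on both sides of the diagonal, and `|w_ab|² = |h_ab|` turns the row sums of `|H|` into the row
sums of `W ∘ conj W`.
-/

open Matrix Complex Finset

namespace Complex

theorem norm_ofReal_sqrt_norm_sq (z : ℂ) : ‖((√‖z‖ : ℝ) : ℂ)‖ ^ 2 = ‖z‖ := by
  simp

theorem norm_div_ofReal_sqrt_norm_sq (z : ℂ) : ‖z / (√‖z‖ : ℝ)‖ ^ 2 = ‖z‖ := by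
  rcases eq_or_ne z 0 with rfl | hz
  · simp
  · rw [norm_div, div_pow, norm_ofReal_sqrt_norm_sq, sq]
    exact mul_div_cancel_right₀ _ (norm_ne_zero_iff.mpr hz)

theorem div_ofReal_sqrt_norm_mul_self (z : ℂ) : z / (√‖z‖ : ℝ) * (√‖z‖ : ℝ) = z := by
  rcases eq_or_ne z 0 with rfl | hz
  · simp
  · exact div_mul_cancel₀ z (by simpa using hz)

end Complex

namespace Matrix

variable {ι : Type*} [LinearOrder ι]

noncomputable def hadamardFactor (H : Matrix ι ι ℂ) : Matrix ι ι ℂ :=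
  fun a b => if a ≤ b then H a b / (√‖H a b‖ : ℝ) else (√‖H a b‖ : ℝ)

theorem hadamardFactor_eq_zero_iff (H : Matrix ι ι ℂ) (a b : ι) :
    H.hadamardFactor a b = 0 ↔ H a b = 0 := by
  unfold hadamardFactor
  split_ifs <;> simp

theorem norm_hadamardFactor_sq (H : Matrix ι ι ℂ) (a b : ι) :
    ‖H.hadamardFactor a b‖ ^ 2 = ‖H a b‖ := by
  unfold hadamardFactor
  split_ifs
  · exact norm_div_ofReal_sqrt_norm_sq _
  · exact norm_ofReal_sqrt_norm_sq _

theorem hadamardFactor_mul_star {H : Matrix ι ι ℂ} (hH : H.IsHermitian)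
    (hdiag : ∀ a, H a a = 0) (a b : ι) :
    H.hadamardFactor a b * star (H.hadamardFactor b a) = H a b := by
  have hnorm : ‖H b a‖ = ‖H a b‖ := by rw [← hH.apply a b, norm_star]
  unfold hadamardFactor
  rcases lt_trichotomy a b with hab | rfl | hab
  · rw [if_pos hab.le, if_neg hab.not_ge, hnorm, star_def, conj_ofReal]
    exact div_ofReal_sqrt_norm_mul_self _
  · simp [hdiag]
  · rw [if_neg hab.not_ge, if_pos hab.le, star_div₀, hH.apply, star_def, conj_ofReal, hnorm,
      mul_comm]
    exact div_ofReal_sqrt_norm_mul_self _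

end Matrix

theorem stmt14 {n : ℕ} (H : Matrix (Fin n) (Fin n) ℂ)
    (hherm : Hᴴ = H)
    (hdiag : ∀ a, H a a = 0)
    (hrow : ∀ a, ∑ b, ‖H a b‖ = 1) :
    ∃ W : Matrix (Fin n) (Fin n) ℂ,
      (∀ a b, W a b ≠ 0 ↔ H a b ≠ 0) ∧
      (∀ a b, W a b * star (W b a) = H a b) ∧
      (∀ a, ∑ b, ‖W a b‖ ^ 2 = 1) :=
  ⟨H.hadamardFactor, fun a b => (H.hadamardFactor_eq_zero_iff a b).not,
    hadamardFactor_mul_star hherm hdiag,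
    fun a => by simp_rw [norm_hadamardFactor_sq, hrow]⟩
end

section
/- Let p be an odd prime. For any two distinct integers j, k with 1 ≤ j, k ≤ (p−1)/2, the squarefree parts of j(p−j) and k(p−k) are distinct; equivalently, j(p−j)·k(p−k) is not a perfect square. -/
/-!
Put `c = a b` and `t = p - a - b`. Then `a(p-a) · b(p-b) = c² + p c t`, so if this is a square `m²`,
then `p ∣ (m - c)(m + c)`; after changing the sign of `m` we may write `m + c = p u`, which gives
`c (t + 2u) = p u²`. As `p ∤ c`, this yields `t + 2u = p v` and `u² = c v` with `v ≥ 1`, that is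
`(p (v - 1) + a + b)² = 4 a b v`. For `v = 1` this is `(a - b)² = 0`, and for `v ≥ 2` the left side
exceeds `((a + b) v)² ≥ 4 a b v` because `a + b < p`.
-/

namespace Int

lemma not_prime_dvd_mul_of_lt {p a b : ℤ} (hp : Prime p) (ha : 0 < a) (hb : 0 < b)
    (hap : a < p) (hbp : b < p) : ¬p ∣ a * b := by
  intro h
  rcases hp.dvd_mul.mp h with h | h
  · exact (Int.le_of_dvd ha h).not_gt hap
  · exact (Int.le_of_dvd hb h).not_gt hbp

lemma exists_sq_eq_mul_of_sq_eq_sq_add {p c t m : ℤ} (hp : Prime p) (hc : ¬p ∣ c)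
    (h : m ^ 2 = c ^ 2 + p * c * t) : ∃ u v, u ^ 2 = c * v ∧ t + 2 * u = p * v := by
  obtain ⟨n, hn, u, hu⟩ : ∃ n, n ^ 2 = m ^ 2 ∧ p ∣ n + c := by
    have : p ∣ (m - c) * (m + c) := ⟨c * t, by linear_combination h⟩
    rcases hp.dvd_mul.mp this with hd | hd
    · exact ⟨-m, by ring, by rw [neg_add_eq_sub]; exact dvd_sub_comm.mp hd⟩
    · exact ⟨m, rfl, hd⟩
  have hp0 : p ≠ 0 := hp.ne_zero
  have hcu : c * (t + 2 * u) = p * u ^ 2 :=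
    mul_left_cancel₀ hp0 (by linear_combination -h - hn + (n + p * u - c) * hu)
  obtain ⟨v, hv⟩ := (hp.dvd_mul.mp ⟨u ^ 2, hcu⟩).resolve_left hc
  exact ⟨u, v, mul_left_cancel₀ hp0 (by linear_combination c * hv - hcu), hv⟩

lemma eq_of_sq_mul_sub_one_add_eq {p a b v : ℤ} (ha : 0 < a) (hb : 0 < b) (hab : a + b < p)
    (hv : 0 < v) (h : (p * (v - 1) + (a + b)) ^ 2 = 4 * a * b * v) : a = b := by
  have hAM : 4 * a * b ≤ (a + b) ^ 2 := by nlinarith [sq_nonneg (a - b)]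
  rcases (show v = 1 ∨ 2 ≤ v by omega) with rfl | hv2
  · nlinarith [sq_nonneg (a - b)]
  · have hlt : (a + b) * v < p * (v - 1) + (a + b) := by nlinarith
    have hsq : ((a + b) * v) ^ 2 < (p * (v - 1) + (a + b)) ^ 2 :=
      pow_lt_pow_left₀ hlt (by positivity) two_ne_zero
    nlinarith [mul_le_mul_of_nonneg_right hAM hv.le]

theorem eq_of_isSquare_mul_sub_mul_mul_sub {p a b : ℤ} (hp : Prime p) (ha : 0 < a) (hb : 0 < b)
    (hab : a + b < p) (h : IsSquare (a * (p - a) * (b * (p - b)))) : a = b := by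
  obtain ⟨m, hm⟩ := h
  have hc : ¬p ∣ a * b := not_prime_dvd_mul_of_lt hp ha hb (by omega) (by omega)
  obtain ⟨u, v, huv, htu⟩ := exists_sq_eq_mul_of_sq_eq_sq_add (c := a * b) (t := p - a - b)
    (m := m) hp hc (by linear_combination -hm)
  have hv : 0 < v := by
    by_contra! hv
    nlinarith [mul_pos ha hb, mul_nonpos_of_nonneg_of_nonpos (by omega : 0 ≤ p) hv]
  exact eq_of_sq_mul_sub_one_add_eq ha hb hab hv
    (by linear_combination 4 * huv - (p * (v - 1) + (a + b) + 2 * u) * htu)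

end Int

theorem stmt16_general (p : ℕ) (hp : p.Prime)
    (j k : ℕ) (hj1 : 1 ≤ j) (hj2 : j ≤ (p - 1) / 2) (hk1 : 1 ≤ k) (hk2 : k ≤ (p - 1) / 2)
    (hjk : j ≠ k) :
    ¬IsSquare (j * (p - j) * (k * (p - k))) := by
  intro hsq
  have hjkp : j + k < p := by omega
  replace hsq := hsq.map (Nat.castRingHom ℤ)
  push_cast [Nat.cast_sub (show j ≤ p by omega), Nat.cast_sub (show k ≤ p by omega)] at hsq
  exact hjk <| Int.ofNat_inj.mp <| Int.eq_of_isSquare_mul_sub_mul_mul_sub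
    (Nat.prime_iff_prime_int.mp hp) (by omega) (by omega) (by exact_mod_cast hjkp) hsq

theorem stmt16 (p : ℕ) (hp : p.Prime) (hodd : Odd p)
    (j k : ℕ) (hj1 : 1 ≤ j) (hj2 : j ≤ (p - 1) / 2) (hk1 : 1 ≤ k) (hk2 : k ≤ (p - 1) / 2)
    (hjk : j ≠ k) :
    ¬IsSquare (j * (p - j) * (k * (p - k))) :=
  stmt16_general p hp j k hj1 hj2 hk1 hk2 hjk
end
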